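/- arXiv:1405.5191 — 3 statements merged into one kernel-verified Lean document; each statement's English description precedes it below -/
import Mathlib

section
/- Let H ⊂ [n] with |H| = k−2 and let a, b, c, d be cyclically ordered elements of [n] \ H. Let J be a k-element subset of [n]. If H∪{a,c} and H∪{b,d} are both weakly separated from J, then all four sets H∪{a,b}, H∪{b,c}, H∪{c,d}, H∪{d,a} are weakly separated from J. -/
set_option maxHeartbeats 2000000


/-- Four elements of `Fin n` are cyclically ordered: some cyclic rotation of the
sequence is strictly increasing in the usual order. -/
def Cyc4 {n : ℕ} (a b c d : Fin n) : Prop :=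
  (a < b ∧ b < c ∧ c < d) ∨ (b < c ∧ c < d ∧ d < a) ∨
    (c < d ∧ d < a ∧ a < b) ∨ (d < a ∧ a < b ∧ b < c)

/-- `I` and `J` are weakly separated: there are no cyclically ordered
`a, b, c, d` with `a, c ∈ I \ J` and `b, d ∈ J \ I`. -/
def WSep {n : ℕ} (I J : Finset (Fin n)) : Prop :=
  ¬ ∃ a b c d : Fin n, Cyc4 a b c d ∧
    a ∈ I \ J ∧ c ∈ I \ J ∧ b ∈ J \ I ∧ d ∈ J \ I

theorem cyc4_rot {n : ℕ} {x y z w : Fin n} (h : Cyc4 x y z w) : Cyc4 z w x y := by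
  unfold Cyc4 at *; tauto

theorem kill {n : ℕ} {I J : Finset (Fin n)} (hws : WSep I J) (x y z w : Fin n)
    (hxI : x ∈ I) (hxJ : x ∉ J) (hzI : z ∈ I) (hzJ : z ∉ J)
    (hyJ : y ∈ J) (hyI : y ∉ I) (hwJ : w ∈ J) (hwI : w ∉ I)
    (hcy : Cyc4 x y z w) : False :=
  hws ⟨x, y, z, w, hcy, Finset.mem_sdiff.mpr ⟨hxI, hxJ⟩, Finset.mem_sdiff.mpr ⟨hzI, hzJ⟩,
    Finset.mem_sdiff.mpr ⟨hyJ, hyI⟩, Finset.mem_sdiff.mpr ⟨hwJ, hwI⟩⟩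

theorem memA {n : ℕ} {x y : Fin n} {H : Finset (Fin n)} : x ∈ insert x (insert y H) :=
  Finset.mem_insert_self _ _

theorem memB {n : ℕ} {x y : Fin n} {H : Finset (Fin n)} : y ∈ insert x (insert y H) :=
  Finset.mem_insert_of_mem (Finset.mem_insert_self _ _)

theorem memH {n : ℕ} {x y z : Fin n} {H : Finset (Fin n)} (h : z ∈ H) :
    z ∈ insert x (insert y H) :=
  Finset.mem_insert_of_mem (Finset.mem_insert_of_mem h)

theorem nmemI {n : ℕ} {x y z : Fin n} {H : Finset (Fin n)} (h1 : z ≠ x) (h2 : z ≠ y)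
    (h3 : z ∉ H) : z ∉ insert x (insert y H) := by
  simp [Finset.mem_insert, h1, h2, h3]

theorem exists_third {α : Type*} [DecidableEq α] {A B : Finset α} (h : A.card = B.card)
    {u v w : α} (hu : u ∈ B) (hv : v ∈ B) (hw : w ∈ B)
    (huv : u ≠ v) (huw : u ≠ w) (hvw : v ≠ w) (x y : α) :
    ∃ z, z ∈ A ∧ z ≠ x ∧ z ≠ y := by
  by_contra hcon
  push_neg at hcon
  have hsub : A ⊆ {x, y} := by
    intro z hz
    simp only [Finset.mem_insert, Finset.mem_singleton]
    by_cases hzx : z = x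
    · exact Or.inl hzx
    · exact Or.inr (hcon z hz hzx)
  have hA2 : A.card ≤ 2 :=
    (Finset.card_le_card hsub).trans (by simpa using Finset.card_insert_le x {y})
  have hB3 : 3 ≤ B.card := by
    have hsub2 : ({u, v, w} : Finset α) ⊆ B := by
      intro z hz
      simp only [Finset.mem_insert, Finset.mem_singleton] at hz
      rcases hz with rfl | rfl | rfl <;> assumption
    have hcard : ({u, v, w} : Finset α).card = 3 := by
      rw [Finset.card_insert_of_notMem (by simp [huv, huw]),
        Finset.card_insert_of_notMem (by simp [hvw]), Finset.card_singleton]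
    have := Finset.card_le_card hsub2
    omega
  omega

theorem key (n k : ℕ) (hk : 2 ≤ k) (H : Finset (Fin n)) (hH : H.card = k - 2)
    (a b c d : Fin n) (ha : a ∉ H) (hb : b ∉ H) (hc : c ∉ H) (hd : d ∉ H)
    (hcyc : Cyc4 a b c d) (J : Finset (Fin n)) (hJ : J.card = k)
    (h1 : WSep (insert a (insert c H)) J) (h2 : WSep (insert b (insert d H)) J) :
    WSep (insert a (insert b H)) J := by
  unfold Cyc4 at hcyc
  have nab : a ≠ b := by rcases hcyc with h'|h'|h'|h' <;> omega
  have nac : a ≠ c := by rcases hcyc with h'|h'|h'|h' <;> omega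
  have nad : a ≠ d := by rcases hcyc with h'|h'|h'|h' <;> omega
  have nbc : b ≠ c := by rcases hcyc with h'|h'|h'|h' <;> omega
  have nbd : b ≠ d := by rcases hcyc with h'|h'|h'|h' <;> omega
  have ncd : c ≠ d := by rcases hcyc with h'|h'|h'|h' <;> omega
  have hanotin : a ∉ insert b H := by simp [Finset.mem_insert, nab, ha]
  have hI0 : (insert a (insert b H)).card = k := by
    rw [Finset.card_insert_of_notMem hanotin, Finset.card_insert_of_notMem hb, hH]
    omega
  have hAB : ((insert a (insert b H)) \ J).card = (J \ (insert a (insert b H))).card :=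
    Finset.card_sdiff_comm (hI0.trans hJ.symm)
  -- Case: p, r both in H, witness pattern p, c, r, d
  have caseHHcd : ∀ p r : Fin n, p ∈ H → p ∉ J → r ∈ H → r ∉ J → c ∈ J → d ∈ J →
      Cyc4 p c r d → False := by
    intro p r hpH hpJ hrH hrJ hcJ hdJ hw
    have hwu := hw
    unfold Cyc4 at hwu
    have npa : p ≠ a := fun e => ha (e ▸ hpH)
    have npb : p ≠ b := fun e => hb (e ▸ hpH)
    have npc : p ≠ c := fun e => hc (e ▸ hpH)
    have npd : p ≠ d := fun e => hd (e ▸ hpH)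
    have nra : r ≠ a := fun e => ha (e ▸ hrH)
    have nrb : r ≠ b := fun e => hb (e ▸ hrH)
    have nrc : r ≠ c := fun e => hc (e ▸ hrH)
    have nrd : r ≠ d := fun e => hd (e ▸ hrH)
    have npr : p ≠ r := by rcases hcyc with h'|h'|h'|h' <;> rcases hwu with g'|g'|g'|g' <;> omega
    by_cases habJ : a ∈ J ∧ b ∈ J
    · obtain ⟨haJ, hbJ⟩ := habJ
      have hreg : ((d < p ∧ p < b) ∨ (p < b ∧ b < d) ∨ (b < d ∧ d < p)) ∨
          ((b < p ∧ p < c) ∨ (p < c ∧ c < b) ∨ (c < b ∧ b < p)) := by rcases hcyc with h'|h'|h'|h' <;> rcases hwu with g'|g'|g'|g' <;> omega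
      rcases hreg with hreg | hreg
      · exact kill h1 p b r d (memH hpH) hpJ (memH hrH) hrJ hbJ (nmemI nab.symm nbc hb) hdJ
          (nmemI nad.symm ncd.symm hd) (by unfold Cyc4; rcases hcyc with h'|h'|h'|h' <;> rcases hwu with g'|g'|g'|g' <;> omega)
      · exact kill h2 p c r a (memH hpH) hpJ (memH hrH) hrJ hcJ (nmemI nbc.symm ncd hc) haJ
          (nmemI nab nad ha) (by unfold Cyc4; rcases hcyc with h'|h'|h'|h' <;> rcases hwu with g'|g'|g'|g' <;> omega)
    · have hex : ∃ z, z ∈ J \ insert a (insert b H) ∧ z ≠ c ∧ z ≠ d := by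
        have hpA : p ∈ (insert a (insert b H)) \ J := Finset.mem_sdiff.mpr ⟨memH hpH, hpJ⟩
        have hrA : r ∈ (insert a (insert b H)) \ J := Finset.mem_sdiff.mpr ⟨memH hrH, hrJ⟩
        rcases Classical.em (a ∈ J) with haJ | haJ
        · have hbJ : b ∉ J := fun hbJ => habJ ⟨haJ, hbJ⟩
          have hbA : b ∈ (insert a (insert b H)) \ J := Finset.mem_sdiff.mpr ⟨memB, hbJ⟩
          exact exists_third hAB.symm hpA hrA hbA npr npb nrb c d
        · have haA : a ∈ (insert a (insert b H)) \ J := Finset.mem_sdiff.mpr ⟨memA, haJ⟩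
          exact exists_third hAB.symm hpA hrA haA npr npa nra c d
      obtain ⟨u, hu, huc, hud⟩ := hex
      obtain ⟨huJ, huI⟩ := Finset.mem_sdiff.mp hu
      simp only [Finset.mem_insert, not_or] at huI
      obtain ⟨hua, hub, huH⟩ := huI
      have nup : u ≠ p := fun e => hpJ (e ▸ huJ)
      have nur : u ≠ r := fun e => hrJ (e ▸ huJ)
      have hreg : ((p < u ∧ u < r) ∨ (u < r ∧ r < p) ∨ (r < p ∧ p < u)) ∨
          ((r < u ∧ u < p) ∨ (u < p ∧ p < r) ∨ (p < r ∧ r < u)) := by rcases hcyc with h'|h'|h'|h' <;> rcases hwu with g'|g'|g'|g' <;> omega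
      rcases hreg with hreg | hreg
      · exact kill h1 p u r d (memH hpH) hpJ (memH hrH) hrJ huJ (nmemI hua huc huH) hdJ
          (nmemI nad.symm ncd.symm hd) (by unfold Cyc4; rcases hcyc with h'|h'|h'|h' <;> rcases hwu with g'|g'|g'|g' <;> omega)
      · exact kill h2 p c r u (memH hpH) hpJ (memH hrH) hrJ hcJ (nmemI nbc.symm ncd hc) huJ
          (nmemI hub hud huH) (by unfold Cyc4; rcases hcyc with h'|h'|h'|h' <;> rcases hwu with g'|g'|g'|g' <;> omega)
  -- Case: p, r both in H
  have caseHH : ∀ p r q s : Fin n, p ∈ H → p ∉ J → r ∈ H → r ∉ J →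
      q ∈ J → q ∉ insert a (insert b H) → s ∈ J → s ∉ insert a (insert b H) →
      Cyc4 p q r s → False := by
    intro p r q s hpH hpJ hrH hrJ hqJ hqI hsJ hsI hw
    simp only [Finset.mem_insert, not_or] at hqI hsI
    obtain ⟨hqa, hqb, hqH⟩ := hqI
    obtain ⟨hsa, hsb, hsH⟩ := hsI
    by_cases hqc : q = c
    · by_cases hsd : s = d
      · exact caseHHcd p r hpH hpJ hrH hrJ (hqc ▸ hqJ) (hsd ▸ hsJ)
          (by rw [hqc, hsd] at hw; exact hw)
      · have hqd : q ≠ d := fun e => ncd (hqc.symm.trans e)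
        exact kill h2 p q r s (memH hpH) hpJ (memH hrH) hrJ hqJ (nmemI hqb hqd hqH) hsJ
          (nmemI hsb hsd hsH) hw
    · by_cases hsc : s = c
      · by_cases hqd : q = d
        · refine caseHHcd r p hrH hrJ hpH hpJ (hsc ▸ hsJ) (hqd ▸ hqJ) ?_
          rw [hqd, hsc] at hw
          exact cyc4_rot hw
        · have hsd : s ≠ d := fun e => ncd (hsc.symm.trans e)
          exact kill h2 p q r s (memH hpH) hpJ (memH hrH) hrJ hqJ (nmemI hqb hqd hqH) hsJ
            (nmemI hsb hsd hsH) hw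
      · exact kill h1 p q r s (memH hpH) hpJ (memH hrH) hrJ hqJ (nmemI hqa hqc hqH) hsJ
          (nmemI hsa hsc hsH) hw
  -- Case: p = a, r in H
  have caseAH : ∀ r q s : Fin n, r ∈ H → r ∉ J → a ∉ J →
      q ∈ J → q ∉ insert a (insert b H) → s ∈ J → s ∉ insert a (insert b H) →
      Cyc4 a q r s → False := by
    intro r q s hrH hrJ haJ hqJ hqI hsJ hsI hw
    simp only [Finset.mem_insert, not_or] at hqI hsI
    obtain ⟨hqa, hqb, hqH⟩ := hqI
    obtain ⟨hsa, hsb, hsH⟩ := hsI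
    have hwu := hw
    unfold Cyc4 at hwu
    have nra : r ≠ a := fun e => ha (e ▸ hrH)
    have nrb : r ≠ b := fun e => hb (e ▸ hrH)
    have nrc : r ≠ c := fun e => hc (e ▸ hrH)
    have nrd : r ≠ d := fun e => hd (e ▸ hrH)
    by_cases hcJ : c ∈ J
    · by_cases hdJ : d ∈ J
      · -- case D : c ∈ J, d ∈ J
        by_cases hqc : q = c
        · subst hqc
          by_cases hbJ : b ∈ J
          · have hsc : s ≠ q := by rcases hcyc with h'|h'|h'|h' <;> rcases hwu with g'|g'|g'|g' <;> omega
            exact kill h1 a b r s memA haJ (memH hrH) hrJ hbJ (nmemI nab.symm nbc hb) hsJ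
              (nmemI hsa hsc hsH) (by unfold Cyc4; rcases hcyc with h'|h'|h'|h' <;> rcases hwu with g'|g'|g'|g' <;> omega)
          · have hreg : ((q < r ∧ r < d) ∨ (r < d ∧ d < q) ∨ (d < q ∧ q < r)) ∨
                ((d < r ∧ r < a) ∨ (r < a ∧ a < d) ∨ (a < d ∧ d < r)) := by rcases hcyc with h'|h'|h'|h' <;> rcases hwu with g'|g'|g'|g' <;> omega
            rcases hreg with hreg | hreg
            · by_cases hsd : s = d
              · subst hsd
                have hex : ∃ z, z ∈ J \ insert a (insert b H) ∧ z ≠ q ∧ z ≠ s := by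
                  have haA : a ∈ (insert a (insert b H)) \ J := Finset.mem_sdiff.mpr ⟨memA, haJ⟩
                  have hbA : b ∈ (insert a (insert b H)) \ J := Finset.mem_sdiff.mpr ⟨memB, hbJ⟩
                  have hrA : r ∈ (insert a (insert b H)) \ J := Finset.mem_sdiff.mpr ⟨memH hrH, hrJ⟩
                  exact exists_third hAB.symm haA hbA hrA nab nra.symm nrb.symm q s
                obtain ⟨u, hu, huq, hus⟩ := hex
                obtain ⟨huJ, huI⟩ := Finset.mem_sdiff.mp hu
                simp only [Finset.mem_insert, not_or] at huI
                obtain ⟨hua, hub, huH⟩ := huI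
                have nur : u ≠ r := fun e => hrJ (e ▸ huJ)
                have hreg2 : ((a < u ∧ u < r) ∨ (u < r ∧ r < a) ∨ (r < a ∧ a < u)) ∨
                    ((r < u ∧ u < a) ∨ (u < a ∧ a < r) ∨ (a < r ∧ r < u)) := by rcases hcyc with h'|h'|h'|h' <;> rcases hwu with g'|g'|g'|g' <;> omega
                rcases hreg2 with hreg2 | hreg2
                · exact kill h1 a u r s memA haJ (memH hrH) hrJ huJ (nmemI hua huq huH) hsJ
                    (nmemI hsa (by rcases hcyc with h'|h'|h'|h' <;> rcases hwu with g'|g'|g'|g' <;> omega) hsH) (by unfold Cyc4; rcases hcyc with h'|h'|h'|h' <;> rcases hwu with g'|g'|g'|g' <;> omega)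
                · exact kill h2 b q r u memA hbJ (memH hrH) hrJ hcJ (nmemI nbc.symm ncd hc) huJ
                    (nmemI hub hus huH) (by unfold Cyc4; rcases hcyc with h'|h'|h'|h' <;> rcases hwu with g'|g'|g'|g' <;> omega)
              · exact kill h2 b q r s memA hbJ (memH hrH) hrJ hcJ (nmemI nbc.symm ncd hc) hsJ
                  (nmemI hsb hsd hsH) (by unfold Cyc4; rcases hcyc with h'|h'|h'|h' <;> rcases hwu with g'|g'|g'|g' <;> omega)
            · have hsc : s ≠ q := by rcases hcyc with h'|h'|h'|h' <;> rcases hwu with g'|g'|g'|g' <;> omega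
              exact kill h1 a d r s memA haJ (memH hrH) hrJ hdJ (nmemI nad.symm ncd.symm hd) hsJ
                (nmemI hsa hsc hsH) (by unfold Cyc4; rcases hcyc with h'|h'|h'|h' <;> rcases hwu with g'|g'|g'|g' <;> omega)
        · by_cases hsc : s = c
          · subst hsc
            exact kill h1 a q r d memA haJ (memH hrH) hrJ hqJ (nmemI hqa hqc hqH) hdJ
              (nmemI nad.symm ncd.symm hd) (by unfold Cyc4; rcases hcyc with h'|h'|h'|h' <;> rcases hwu with g'|g'|g'|g' <;> omega)
          · exact kill h1 a q r s memA haJ (memH hrH) hrJ hqJ (nmemI hqa hqc hqH) hsJ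
              (nmemI hsa hsc hsH) hw
      · -- case B : c ∈ J, d ∉ J
        have hqd : q ≠ d := fun e => hdJ (e ▸ hqJ)
        have hsd : s ≠ d := fun e => hdJ (e ▸ hsJ)
        by_cases hqc : q = c
        · subst hqc
          by_cases hbJ : b ∈ J
          · have hsc : s ≠ q := by rcases hcyc with h'|h'|h'|h' <;> rcases hwu with g'|g'|g'|g' <;> omega
            exact kill h1 a b r s memA haJ (memH hrH) hrJ hbJ (nmemI nab.symm nbc hb) hsJ
              (nmemI hsa hsc hsH) (by unfold Cyc4; rcases hcyc with h'|h'|h'|h' <;> rcases hwu with g'|g'|g'|g' <;> omega)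
          · have hreg : ((q < r ∧ r < d) ∨ (r < d ∧ d < q) ∨ (d < q ∧ q < r)) ∨
                ((d < r ∧ r < a) ∨ (r < a ∧ a < d) ∨ (a < d ∧ d < r)) := by rcases hcyc with h'|h'|h'|h' <;> rcases hwu with g'|g'|g'|g' <;> omega
            rcases hreg with hreg | hreg
            · have hreg2 : ((r < s ∧ s < d) ∨ (s < d ∧ d < r) ∨ (d < r ∧ r < s)) ∨
                  ((d < s ∧ s < a) ∨ (s < a ∧ a < d) ∨ (a < d ∧ d < s)) := by rcases hcyc with h'|h'|h'|h' <;> rcases hwu with g'|g'|g'|g' <;> omega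
              rcases hreg2 with hreg2 | hreg2
              · exact kill h2 r s d q (memH hrH) hrJ memB hdJ hsJ (nmemI hsb hsd hsH) hcJ
                  (nmemI nbc.symm ncd hc) (by unfold Cyc4; rcases hcyc with h'|h'|h'|h' <;> rcases hwu with g'|g'|g'|g' <;> omega)
              · exact kill h2 b q d s memA hbJ memB hdJ hcJ (nmemI nbc.symm ncd hc) hsJ
                  (nmemI hsb hsd hsH) (by unfold Cyc4; rcases hcyc with h'|h'|h'|h' <;> rcases hwu with g'|g'|g'|g' <;> omega)
            · exact kill h2 b q r s memA hbJ (memH hrH) hrJ hcJ (nmemI nbc.symm ncd hc) hsJ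
                (nmemI hsb hsd hsH) (by unfold Cyc4; rcases hcyc with h'|h'|h'|h' <;> rcases hwu with g'|g'|g'|g' <;> omega)
        · by_cases hsc : s = c
          · subst hsc
            exact kill h2 r s d q (memH hrH) hrJ memB hdJ hcJ (nmemI nbc.symm ncd hc) hqJ
              (nmemI hqb hqd hqH) (by unfold Cyc4; rcases hcyc with h'|h'|h'|h' <;> rcases hwu with g'|g'|g'|g' <;> omega)
          · exact kill h1 a q r s memA haJ (memH hrH) hrJ hqJ (nmemI hqa hqc hqH) hsJ
              (nmemI hsa hsc hsH) hw
    · -- case A / C : c ∉ J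
      have hqc : q ≠ c := fun e => hcJ (e ▸ hqJ)
      have hsc : s ≠ c := fun e => hcJ (e ▸ hsJ)
      exact kill h1 a q r s memA haJ (memH hrH) hrJ hqJ (nmemI hqa hqc hqH) hsJ
        (nmemI hsa hsc hsH) hw
  -- Case: p = b, r in H
  have caseBH : ∀ r q s : Fin n, r ∈ H → r ∉ J → b ∉ J →
      q ∈ J → q ∉ insert a (insert b H) → s ∈ J → s ∉ insert a (insert b H) →
      Cyc4 b q r s → False := by
    intro r q s hrH hrJ hbJ hqJ hqI hsJ hsI hw
    simp only [Finset.mem_insert, not_or] at hqI hsI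
    obtain ⟨hqa, hqb, hqH⟩ := hqI
    obtain ⟨hsa, hsb, hsH⟩ := hsI
    have hwu := hw
    unfold Cyc4 at hwu
    have nra : r ≠ a := fun e => ha (e ▸ hrH)
    have nrb : r ≠ b := fun e => hb (e ▸ hrH)
    have nrc : r ≠ c := fun e => hc (e ▸ hrH)
    have nrd : r ≠ d := fun e => hd (e ▸ hrH)
    by_cases hdJ : d ∈ J
    · by_cases hcJ : c ∈ J
      · -- case D
        by_cases hsd : s = d
        · subst hsd
          by_cases haJ : a ∈ J
          · have hqd : q ≠ s := by rcases hcyc with h'|h'|h'|h' <;> rcases hwu with g'|g'|g'|g' <;> omega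
            exact kill h2 b q r a memA hbJ (memH hrH) hrJ hqJ (nmemI hqb hqd hqH) haJ
              (nmemI nab nad ha) (by unfold Cyc4; rcases hcyc with h'|h'|h'|h' <;> rcases hwu with g'|g'|g'|g' <;> omega)
          · by_cases hqc : q = c
            · subst hqc
              have hex : ∃ z, z ∈ J \ insert a (insert b H) ∧ z ≠ q ∧ z ≠ s := by
                have haA : a ∈ (insert a (insert b H)) \ J := Finset.mem_sdiff.mpr ⟨memA, haJ⟩
                have hbA : b ∈ (insert a (insert b H)) \ J := Finset.mem_sdiff.mpr ⟨memB, hbJ⟩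
                have hrA : r ∈ (insert a (insert b H)) \ J := Finset.mem_sdiff.mpr ⟨memH hrH, hrJ⟩
                exact exists_third hAB.symm haA hbA hrA nab nra.symm nrb.symm q s
              obtain ⟨u, hu, huq, hus⟩ := hex
              obtain ⟨huJ, huI⟩ := Finset.mem_sdiff.mp hu
              simp only [Finset.mem_insert, not_or] at huI
              obtain ⟨hua, hub, huH⟩ := huI
              have nur : u ≠ r := fun e => hrJ (e ▸ huJ)
              have hreg2 : ((a < u ∧ u < r) ∨ (u < r ∧ r < a) ∨ (r < a ∧ a < u)) ∨
                  ((r < u ∧ u < a) ∨ (u < a ∧ a < r) ∨ (a < r ∧ r < u)) := by rcases hcyc with h'|h'|h'|h' <;> rcases hwu with g'|g'|g'|g' <;> omega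
              rcases hreg2 with hreg2 | hreg2
              · exact kill h1 a u r s memA haJ (memH hrH) hrJ huJ (nmemI hua huq huH) hsJ
                  (nmemI hsa (by rcases hcyc with h'|h'|h'|h' <;> rcases hwu with g'|g'|g'|g' <;> omega) hsH) (by unfold Cyc4; rcases hcyc with h'|h'|h'|h' <;> rcases hwu with g'|g'|g'|g' <;> omega)
              · exact kill h2 b q r u memA hbJ (memH hrH) hrJ hcJ (nmemI nbc.symm ncd hc) huJ
                  (nmemI hub hus huH) (by unfold Cyc4; rcases hcyc with h'|h'|h'|h' <;> rcases hwu with g'|g'|g'|g' <;> omega)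
            · have hqd : q ≠ s := by rcases hcyc with h'|h'|h'|h' <;> rcases hwu with g'|g'|g'|g' <;> omega
              exact kill h1 a q r s memA haJ (memH hrH) hrJ hqJ (nmemI hqa hqc hqH) hdJ
                (nmemI nad.symm ncd.symm hd) (by unfold Cyc4; rcases hcyc with h'|h'|h'|h' <;> rcases hwu with g'|g'|g'|g' <;> omega)
        · by_cases hqd : q = d
          · subst hqd
            have hsd : s ≠ q := by rcases hcyc with h'|h'|h'|h' <;> rcases hwu with g'|g'|g'|g' <;> omega
            exact kill h2 b c r s memA hbJ (memH hrH) hrJ hcJ (nmemI nbc.symm ncd hc) hsJ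
              (nmemI hsb hsd hsH) (by unfold Cyc4; rcases hcyc with h'|h'|h'|h' <;> rcases hwu with g'|g'|g'|g' <;> omega)
          · exact kill h2 b q r s memA hbJ (memH hrH) hrJ hqJ (nmemI hqb hqd hqH) hsJ
              (nmemI hsb hsd hsH) hw
      · -- case C : c ∉ J, d ∈ J
        have hqc : q ≠ c := fun e => hcJ (e ▸ hqJ)
        have hsc : s ≠ c := fun e => hcJ (e ▸ hsJ)
        by_cases hqd : q = d
        · subst hqd
          exact kill h1 c q r s memB hcJ (memH hrH) hrJ hdJ (nmemI nad.symm ncd.symm hd) hsJ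
            (nmemI hsa hsc hsH) (by unfold Cyc4; rcases hcyc with h'|h'|h'|h' <;> rcases hwu with g'|g'|g'|g' <;> omega)
        · by_cases hsd : s = d
          · subst hsd
            by_cases haJ : a ∈ J
            · exact kill h2 b q r a memA hbJ (memH hrH) hrJ hqJ (nmemI hqb hqd hqH) haJ
                (nmemI nab nad ha) (by unfold Cyc4; rcases hcyc with h'|h'|h'|h' <;> rcases hwu with g'|g'|g'|g' <;> omega)
            · exact kill h1 a q r s memA haJ (memH hrH) hrJ hqJ (nmemI hqa hqc hqH) hdJ
                (nmemI nad.symm ncd.symm hd) (by unfold Cyc4; rcases hcyc with h'|h'|h'|h' <;> rcases hwu with g'|g'|g'|g' <;> omega)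
          · exact kill h2 b q r s memA hbJ (memH hrH) hrJ hqJ (nmemI hqb hqd hqH) hsJ
              (nmemI hsb hsd hsH) hw
    · -- case A / B : d ∉ J
      have hqd : q ≠ d := fun e => hdJ (e ▸ hqJ)
      have hsd : s ≠ d := fun e => hdJ (e ▸ hsJ)
      exact kill h2 b q r s memA hbJ (memH hrH) hrJ hqJ (nmemI hqb hqd hqH) hsJ
        (nmemI hsb hsd hsH) hw
  -- Case: p = a, r = b
  have caseAB : ∀ q s : Fin n, a ∉ J → b ∉ J →
      q ∈ J → q ∉ insert a (insert b H) → s ∈ J → s ∉ insert a (insert b H) →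
      Cyc4 a q b s → False := by
    intro q s haJ hbJ hqJ hqI hsJ hsI hw
    simp only [Finset.mem_insert, not_or] at hqI hsI
    obtain ⟨hqa, hqb, hqH⟩ := hqI
    obtain ⟨hsa, hsb, hsH⟩ := hsI
    have hwu := hw
    unfold Cyc4 at hwu
    by_cases hcJ : c ∈ J
    · by_cases hdJ : d ∈ J
      · -- case D
        have hqc : q ≠ c := by rcases hcyc with h'|h'|h'|h' <;> rcases hwu with g'|g'|g'|g' <;> omega
        have hqd : q ≠ d := by rcases hcyc with h'|h'|h'|h' <;> rcases hwu with g'|g'|g'|g' <;> omega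
        have hex : ∃ z, z ∈ (insert a (insert b H)) \ J ∧ z ≠ a ∧ z ≠ b := by
          have hqB : q ∈ J \ (insert a (insert b H)) :=
            Finset.mem_sdiff.mpr ⟨hqJ, nmemI hqa hqb hqH⟩
          have hcB : c ∈ J \ (insert a (insert b H)) :=
            Finset.mem_sdiff.mpr ⟨hcJ, nmemI nac.symm nbc.symm hc⟩
          have hdB : d ∈ J \ (insert a (insert b H)) :=
            Finset.mem_sdiff.mpr ⟨hdJ, nmemI nad.symm nbd.symm hd⟩
          exact exists_third hAB hqB hcB hdB hqc hqd ncd a b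
        obtain ⟨e, heA, hea, heb⟩ := hex
        obtain ⟨heI, heJ⟩ := Finset.mem_sdiff.mp heA
        have heH : e ∈ H := by
          rcases Finset.mem_insert.mp heI with h | h
          · exact absurd h hea
          · rcases Finset.mem_insert.mp h with h | h
            · exact absurd h heb
            · exact h
        have nec : e ≠ c := fun x => heJ (by rw [x]; exact hcJ)
        have ned : e ≠ d := fun x => heJ (by rw [x]; exact hdJ)
        have neq : e ≠ q := fun x => heJ (by rw [x]; exact hqJ)
        have hreg : ((q < e ∧ e < d) ∨ (e < d ∧ d < q) ∨ (d < q ∧ q < e)) ∨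
            ((d < e ∧ e < q) ∨ (e < q ∧ q < d) ∨ (q < d ∧ d < e)) := by rcases hcyc with h'|h'|h'|h' <;> rcases hwu with g'|g'|g'|g' <;> omega
        rcases hreg with hreg | hreg
        · exact kill h1 a q e d memA haJ (memH heH) heJ hqJ (nmemI hqa hqc hqH) hdJ
            (nmemI nad.symm ncd.symm hd) (by unfold Cyc4; rcases hcyc with h'|h'|h'|h' <;> rcases hwu with g'|g'|g'|g' <;> omega)
        · exact kill h2 b c e q memA hbJ (memH heH) heJ hcJ (nmemI nbc.symm ncd hc) hqJ
            (nmemI hqb hqd hqH) (by unfold Cyc4; rcases hcyc with h'|h'|h'|h' <;> rcases hwu with g'|g'|g'|g' <;> omega)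
      · -- case B
        have hqd : q ≠ d := fun x => hdJ (x ▸ hqJ)
        exact kill h2 b c d q memA hbJ memB hdJ hcJ (nmemI nbc.symm ncd hc) hqJ
          (nmemI hqb hqd hqH) (by unfold Cyc4; rcases hcyc with h'|h'|h'|h' <;> rcases hwu with g'|g'|g'|g' <;> omega)
    · by_cases hdJ : d ∈ J
      · -- case C
        have hqc : q ≠ c := fun x => hcJ (x ▸ hqJ)
        exact kill h1 a q c d memA haJ memB hcJ hqJ (nmemI hqa hqc hqH) hdJ
          (nmemI nad.symm ncd.symm hd) (by unfold Cyc4; rcases hcyc with h'|h'|h'|h' <;> rcases hwu with g'|g'|g'|g' <;> omega)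
      · -- case A
        have hsc : s ≠ c := fun x => hcJ (x ▸ hsJ)
        have hsd : s ≠ d := fun x => hdJ (x ▸ hsJ)
        have hqc : q ≠ c := fun x => hcJ (x ▸ hqJ)
        have hqd : q ≠ d := fun x => hdJ (x ▸ hqJ)
        have hreg : ((b < s ∧ s < c) ∨ (s < c ∧ c < b) ∨ (c < b ∧ b < s)) ∨
            ((c < s ∧ s < a) ∨ (s < a ∧ a < c) ∨ (a < c ∧ c < s)) := by rcases hcyc with h'|h'|h'|h' <;> rcases hwu with g'|g'|g'|g' <;> omega
        rcases hreg with hreg | hreg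
        · exact kill h2 b s d q memA hbJ memB hdJ hsJ (nmemI hsb hsd hsH) hqJ
            (nmemI hqb hqd hqH) (by unfold Cyc4; rcases hcyc with h'|h'|h'|h' <;> rcases hwu with g'|g'|g'|g' <;> omega)
        · exact kill h1 a q c s memA haJ memB hcJ hqJ (nmemI hqa hqc hqH) hsJ
            (nmemI hsa hsc hsH) (by unfold Cyc4; rcases hcyc with h'|h'|h'|h' <;> rcases hwu with g'|g'|g'|g' <;> omega)
  -- main dispatch
  rintro ⟨p, q, r, s, hw, hp, hr, hq, hs⟩
  obtain ⟨hpI, hpJ⟩ := Finset.mem_sdiff.mp hp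
  obtain ⟨hrI, hrJ⟩ := Finset.mem_sdiff.mp hr
  obtain ⟨hqJ, hqI⟩ := Finset.mem_sdiff.mp hq
  obtain ⟨hsJ, hsI⟩ := Finset.mem_sdiff.mp hs
  have hwu := hw
  unfold Cyc4 at hwu
  rcases Finset.mem_insert.mp hpI with hpa | hpI'
  · rcases Finset.mem_insert.mp hrI with hra | hrI'
    · subst hpa; subst hra; rcases hwu with g'|g'|g'|g' <;> omega
    · rcases Finset.mem_insert.mp hrI' with hrb | hrH
      · subst hpa; subst hrb
        exact caseAB q s hpJ hrJ hqJ hqI hsJ hsI hw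
      · subst hpa
        exact caseAH r q s hrH hrJ hpJ hqJ hqI hsJ hsI hw
  · rcases Finset.mem_insert.mp hpI' with hpb | hpH
    · rcases Finset.mem_insert.mp hrI with hra | hrI'
      · subst hpb; subst hra
        exact caseAB s q hrJ hpJ hsJ hsI hqJ hqI (cyc4_rot hw)
      · rcases Finset.mem_insert.mp hrI' with hrb | hrH
        · subst hpb; subst hrb; rcases hwu with g'|g'|g'|g' <;> omega
        · subst hpb
          exact caseBH r q s hrH hrJ hpJ hqJ hqI hsJ hsI hw
    · rcases Finset.mem_insert.mp hrI with hra | hrI'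
      · subst hra
        exact caseAH p s q hpH hpJ hrJ hsJ hsI hqJ hqI (cyc4_rot hw)
      · rcases Finset.mem_insert.mp hrI' with hrb | hrH
        · subst hrb
          exact caseBH p s q hpH hpJ hrJ hsJ hsI hqJ hqI (cyc4_rot hw)
        · exact caseHH p r q s hpH hpJ hrH hrJ hqJ hqI hsJ hsI hw

/-- Lemma 5.1: if `H∪{a,c}` and `H∪{b,d}` are weakly separated from `J`,
then so are all of `H∪{a,b}`, `H∪{b,c}`, `H∪{c,d}`, `H∪{d,a}`. -/
theorem wsep_cross (n k : ℕ) (hk : 2 ≤ k) (hkn : k ≤ n)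
    (H : Finset (Fin n)) (hH : H.card = k - 2) (a b c d : Fin n)
    (ha : a ∉ H) (hb : b ∉ H) (hc : c ∉ H) (hd : d ∉ H)
    (hcyc : Cyc4 a b c d)
    (J : Finset (Fin n)) (hJ : J.card = k)
    (h1 : WSep (insert a (insert c H)) J)
    (h2 : WSep (insert b (insert d H)) J) :
    WSep (insert a (insert b H)) J ∧ WSep (insert b (insert c H)) J ∧
      WSep (insert c (insert d H)) J ∧ WSep (insert d (insert a H)) J := by
  have rot1 : Cyc4 b c d a := by unfold Cyc4 at *; tauto
  have rot2 : Cyc4 c d a b := by unfold Cyc4 at *; tauto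
  have rot3 : Cyc4 d a b c := by unfold Cyc4 at *; tauto
  refine ⟨key n k hk H hH a b c d ha hb hc hd hcyc J hJ h1 h2,
    key n k hk H hH b c d a hb hc hd ha rot1 J hJ h2 ?_,
    key n k hk H hH c d a b hc hd ha hb rot2 J hJ ?_ ?_,
    key n k hk H hH d a b c hd ha hb hc rot3 J hJ ?_ h1⟩
  · rw [Finset.insert_comm]; exact h1
  · rw [Finset.insert_comm]; exact h1
  · rw [Finset.insert_comm]; exact h2
  · rw [Finset.insert_comm]; exact h2
end

section
/- Let a, b, c, d be cyclically ordered elements of [n] and let H ⊆ [n] \ {a,b,c,d} with |H| = k−2. If J is a k-element subset of [n] containing c and d but not a and not b, and H∪{a,c} ∥ J and H∪{b,d} ∥ J, and there exists q ∈ (J \ H) ∩ (a,b) (open cyclic interval), then H \ J ⊆ [d,q] ∩ [q,c], hence H ⊆ J. -/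
/-- Closed cyclic interval `[x, y]` in `Fin n`. -/
def cycIcc {n : ℕ} (x y : Fin n) : Finset (Fin n) :=
  Finset.univ.filter (fun z => (z - x).val ≤ (y - x).val)

/-- Open cyclic interval `(x, y)` in `Fin n`. -/
def cycIoo {n : ℕ} (x y : Fin n) : Finset (Fin n) :=
  Finset.univ.filter (fun z => z ≠ x ∧ z ≠ y ∧ (z - x).val ≤ (y - x).val)

lemma sub_val {n : ℕ} (x w : Fin n) :
    (x - w).val = if w.val ≤ x.val then x.val - w.val else x.val + n - w.val := by
  have hx := x.isLt; have hw := w.isLt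
  rw [Fin.sub_def]
  show (n - w.val + x.val) % n = _
  split_ifs with h
  · have e : n - w.val + x.val = (x.val - w.val) + n := by omega
    rw [e, Nat.add_mod_right, Nat.mod_eq_of_lt (by omega)]
  · rw [Nat.mod_eq_of_lt (by omega)]; omega

lemma cyc4_iff {n : ℕ} (a b c d : Fin n) :
    Cyc4 a b c d ↔ 0 < (b-a).val ∧ (b-a).val < (c-a).val ∧ (c-a).val < (d-a).val := by
  have hA := a.isLt; have hB := b.isLt; have hC := c.isLt; have hD := d.isLt
  simp only [Cyc4, Fin.lt_def, sub_val]
  split_ifs <;> omega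
set_option maxHeartbeats 4000000 in
lemma blob1 {n : ℕ} (a b c d q h : Fin n)
    (h1' : 0 < (b-a).val) (h2' : (b-a).val < (c-a).val) (h3' : (c-a).val < (d-a).val)
    (hqa : q ≠ a) (hqb : q ≠ b) (hqab : (q-a).val ≤ (b-a).val)
    (hcon : ¬ (h-d).val ≤ (q-d).val) :
    0 < (q-a).val ∧ (q-a).val < (h-a).val ∧ (h-a).val < (d-a).val := by
  have hA := a.isLt; have hB := b.isLt; have hC := c.isLt
  have hD := d.isLt; have hQ := q.isLt; have hh := h.isLt
  have hqa' : q.val ≠ a.val := fun e => hqa (Fin.ext e)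
  have hqb' : q.val ≠ b.val := fun e => hqb (Fin.ext e)
  simp only [sub_val] at *
  split_ifs at * <;> omega

set_option maxHeartbeats 4000000 in
lemma blob2 {n : ℕ} (a b c d q h : Fin n)
    (h1' : 0 < (b-a).val) (h2' : (b-a).val < (c-a).val) (h3' : (c-a).val < (d-a).val)
    (hqa : q ≠ a) (hqb : q ≠ b) (hqab : (q-a).val ≤ (b-a).val)
    (hcon : ¬ (h-q).val ≤ (c-q).val) :
    0 < (c-b).val ∧ (c-b).val < (h-b).val ∧ (h-b).val < (q-b).val := by
  have hA := a.isLt; have hB := b.isLt; have hC := c.isLt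
  have hD := d.isLt; have hQ := q.isLt; have hh := h.isLt
  have hqa' : q.val ≠ a.val := fun e => hqa (Fin.ext e)
  have hqb' : q.val ≠ b.val := fun e => hqb (Fin.ext e)
  simp only [sub_val] at *
  split_ifs at * <;> omega

set_option maxHeartbeats 4000000 in
lemma blob3 {n : ℕ} (a b c d q x : Fin n)
    (h1' : 0 < (b-a).val) (h2' : (b-a).val < (c-a).val) (h3' : (c-a).val < (d-a).val)
    (hqa : q ≠ a) (hqb : q ≠ b) (hqab : (q-a).val ≤ (b-a).val)
    (e1 : (x-d).val ≤ (q-d).val) (e2 : (x-q).val ≤ (c-q).val) :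
    x = q := by
  have hA := a.isLt; have hB := b.isLt; have hC := c.isLt
  have hD := d.isLt; have hQ := q.isLt; have hX := x.isLt
  have hqa' : q.val ≠ a.val := fun e => hqa (Fin.ext e)
  have hqb' : q.val ≠ b.val := fun e => hqb (Fin.ext e)
  refine Fin.ext ?_
  simp only [sub_val] at *
  split_ifs at * <;> omega

/-- Final contradiction step in the proof of the cross lemma. -/
theorem cross_lemma_final (n k : ℕ) (hk : 2 ≤ k) (hkn : k ≤ n)
    (H : Finset (Fin n)) (hH : H.card = k - 2) (a b c d : Fin n)
    (ha : a ∉ H) (hb : b ∉ H) (hc : c ∉ H) (hd : d ∉ H)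
    (hcyc : Cyc4 a b c d)
    (J : Finset (Fin n)) (hJ : J.card = k)
    (hcJ : c ∈ J) (hdJ : d ∈ J) (haJ : a ∉ J) (hbJ : b ∉ J)
    (h1 : WSep (insert a (insert c H)) J)
    (h2 : WSep (insert b (insert d H)) J)
    (q : Fin n) (hqJ : q ∈ J) (hqH : q ∉ H) (hq : q ∈ cycIoo a b) :
    H \ J ⊆ cycIcc d q ∩ cycIcc q c ∧ H ⊆ J := by
  simp only [cycIoo, Finset.mem_filter, Finset.mem_univ, true_and] at hq
  obtain ⟨hqa, hqb, hqab⟩ := hq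
  obtain ⟨h1', h2', h3'⟩ := (cyc4_iff a b c d).mp hcyc
  have haa0 : ((a : Fin n) - a).val = 0 := by rw [sub_val]; simp
  have hqc : q ≠ c := by intro e; rw [e] at hqab; omega
  have hqd : q ≠ d := by intro e; rw [e] at hqab; omega
  have hcb : c ≠ b := by intro e; rw [e] at h2'; omega
  have hcd : c ≠ d := by intro e; rw [e] at h3'; omega
  have hda : d ≠ a := by intro e; rw [e] at h3'; omega
  have hdc : d ≠ c := fun e => hcd e.symm
  have key : ∀ x ∈ H \ J, x ∈ cycIcc d q ∩ cycIcc q c := by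
    intro x hx
    rw [Finset.mem_sdiff] at hx
    obtain ⟨hxH, hxJ⟩ := hx
    have i1 : x ∈ cycIcc d q := by
      by_contra hcon
      simp only [cycIcc, Finset.mem_filter, Finset.mem_univ, true_and] at hcon
      exact h1 ⟨a, q, x, d,
        (cyc4_iff a q x d).mpr (blob1 a b c d q x h1' h2' h3' hqa hqb hqab hcon),
        by simp [Finset.mem_sdiff, haJ],
        by simp [Finset.mem_sdiff, hxH, hxJ],
        by simp [Finset.mem_sdiff, hqJ, hqa, hqc, hqH],
        by simp [Finset.mem_sdiff, hdJ, hda, hdc, hd]⟩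
    have i2 : x ∈ cycIcc q c := by
      by_contra hcon
      simp only [cycIcc, Finset.mem_filter, Finset.mem_univ, true_and] at hcon
      exact h2 ⟨b, c, x, q,
        (cyc4_iff b c x q).mpr (blob2 a b c d q x h1' h2' h3' hqa hqb hqab hcon),
        by simp [Finset.mem_sdiff, hbJ],
        by simp [Finset.mem_sdiff, hxH, hxJ],
        by simp [Finset.mem_sdiff, hcJ, hcb, hcd, hc],
        by simp [Finset.mem_sdiff, hqJ, hqb, hqd, hqH]⟩
    rw [Finset.mem_inter]
    exact ⟨i1, i2⟩
  refine ⟨fun x hx => key x hx, ?_⟩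
  intro x hx
  by_contra hxJ
  have hx2 := key x (Finset.mem_sdiff.mpr ⟨hx, hxJ⟩)
  rw [Finset.mem_inter] at hx2
  simp only [cycIcc, Finset.mem_filter, Finset.mem_univ, true_and] at hx2
  have hxq : x = q := blob3 a b c d q x h1' h2' h3' hqa hqb hqab hx2.1 hx2.2
  exact hqH (hxq ▸ hx)
end

section
/- Let (I_1,...,I_n) be a Grassmann necklace and M its positroid. Then each I_i belongs to M, i.e., I_j ≤_j I_i for all j ∈ [n]. -/
/-- Gale order `≤ᵢ` on subsets of `Fin n`: rotate by `i` and compare the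
sorted lists entrywise. -/
def galeLE {n : ℕ} (i : Fin n) (I J : Finset (Fin n)) : Prop :=
  List.Forall₂ (· ≤ ·) ((I.image (fun z => z - i)).sort (· ≤ ·))
    ((J.image (fun z => z - i)).sort (· ≤ ·))

open Finset

namespace Finset

variable {α : Type*} [LinearOrder α] {k : ℕ}

lemma filter_eq_map_orderEmbOfFin (s : Finset α) (h : #s = k) (p : α → Prop) [DecidablePred p] :
    {x ∈ s | p x} =
      ({m | p (s.orderEmbOfFin h m)} : Finset (Fin k)).map (s.orderEmbOfFin h).toEmbedding := by
  conv_lhs => rw [← map_orderEmbOfFin_univ s h]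
  rw [filter_map]
  rfl

lemma card_filter_lt_orderEmbOfFin (s : Finset α) (h : #s = k) (r : Fin k) :
    #{x ∈ s | x < s.orderEmbOfFin h r} = r := by
  simp [filter_eq_map_orderEmbOfFin s h, filter_gt_eq_Iio]

lemma card_filter_le_orderEmbOfFin (s : Finset α) (h : #s = k) (r : Fin k) :
    #{x ∈ s | x ≤ s.orderEmbOfFin h r} = r + 1 := by
  simp [filter_eq_map_orderEmbOfFin s h, filter_ge_eq_Iic]

lemma orderEmbOfFin_le_of_card_filter_le {s t : Finset α} (hs : #s = k) (ht : #t = k)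
    (hst : ∀ v, #{x ∈ t | x ≤ v} ≤ #{x ∈ s | x ≤ v}) (r : Fin k) :
    s.orderEmbOfFin hs r ≤ t.orderEmbOfFin ht r := by
  by_contra! hlt
  have hsub : {x ∈ s | x ≤ t.orderEmbOfFin ht r} ⊆ {x ∈ s | x < s.orderEmbOfFin hs r} :=
    fun _ => by simpa only [mem_filter] using And.imp_right (·.trans_lt hlt)
  have := (hst _).trans (card_le_card hsub)
  rw [card_filter_le_orderEmbOfFin, card_filter_lt_orderEmbOfFin] at this
  omega

lemma forall₂_sort_of_card_filter_le {s t : Finset α} (hcard : #s = #t)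
    (hst : ∀ v, #{x ∈ t | x ≤ v} ≤ #{x ∈ s | x ≤ v}) :
    List.Forall₂ (· ≤ ·) (s.sort (· ≤ ·)) (t.sort (· ≤ ·)) := by
  rw [List.forall₂_iff_get]
  refine ⟨by simp [hcard], fun r hs ht => ?_⟩
  rw [length_sort] at hs
  exact orderEmbOfFin_le_of_card_filter_le rfl hcard.symm hst ⟨r, hs⟩

lemma card_filter_le_le_of_forall_sdiff_le {s t : Finset α} (hcard : #s = #t)
    (hst : ∀ a ∈ s \ t, ∀ b ∈ t \ s, a ≤ b) (v : α) :
    #{x ∈ t | x ≤ v} ≤ #{x ∈ s | x ≤ v} := by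
  by_cases hb : ∃ b ∈ t \ s, b ≤ v
  · obtain ⟨b, hb, hbv⟩ := hb
    have hsub : {x ∈ s | ¬x ≤ v} ⊆ {x ∈ t | ¬x ≤ v} := by
      intro a ha
      rw [mem_filter] at ha ⊢
      by_contra hat
      exact ha.2 ((hst a (mem_sdiff.2 ⟨ha.1, fun h => hat ⟨h, ha.2⟩⟩) b hb).trans hbv)
    have hs := card_filter_add_card_filter_not (s := s) (· ≤ v)
    have ht := card_filter_add_card_filter_not (s := t) (· ≤ v)
    have := card_le_card hsub
    omega
  · push Not at hb
    refine card_le_card fun b hb' => ?_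
    rw [mem_filter] at hb' ⊢
    by_contra hbs
    exact (hb b (mem_sdiff.2 ⟨hb'.1, fun h => hbs ⟨h, hb'.2⟩⟩)).not_ge hb'.2

lemma forall₂_sort_of_forall_sdiff_le {s t : Finset α} (hcard : #s = #t)
    (hst : ∀ a ∈ s \ t, ∀ b ∈ t \ s, a ≤ b) :
    List.Forall₂ (· ≤ ·) (s.sort (· ≤ ·)) (t.sort (· ≤ ·)) :=
  forall₂_sort_of_card_filter_le hcard (card_filter_le_le_of_forall_sdiff_le hcard hst)

end Finset

lemma galeLE_of_forall_sdiff {n : ℕ} [NeZero n] (i : Fin n) {I J : Finset (Fin n)}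
    (hcard : #I = #J) (hIJ : ∀ x ∈ I \ J, ∀ y ∈ J \ I, x - i ≤ y - i) : galeLE i I J := by
  have hinj : Function.Injective (fun z : Fin n => z - i) := sub_left_injective
  refine forall₂_sort_of_forall_sdiff_le (by rw [card_image_of_injective _ hinj,
    card_image_of_injective _ hinj, hcard]) ?_
  simp only [← image_sdiff _ _ hinj, mem_image]
  rintro _ ⟨x, hx, rfl⟩ _ ⟨y, hy, rfl⟩
  exact hIJ x hx y hy

section Necklace

variable {n : ℕ} [NeZero n] {N : Fin n → Finset (Fin n)}

open scoped Fin.NatCast in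
lemma mem_add_natCast_of_le_sub (hnest : ∀ i : Fin n, N i \ {i} ⊆ N (i + 1)) {j x : Fin n}
    (hx : x ∈ N j) (d : ℕ) (hd : d ≤ (x - j).val) : x ∈ N (j + d) := by
  induction d with
  | zero => simpa using hx
  | succ d ih =>
    have hne : x ≠ j + d := by
      rintro rfl
      rw [add_sub_cancel_left, Fin.val_natCast] at hd
      exact (Nat.mod_le d n).not_gt hd
    have := hnest _ (mem_sdiff.2 ⟨ih (by omega), by simpa using hne⟩)
    simpa [add_assoc] using this

lemma sub_lt_sub_of_mem_sdiff (hnest : ∀ i : Fin n, N i \ {i} ⊆ N (i + 1)) {i j x : Fin n}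
    (hx : x ∈ N j \ N i) : x - j < i - j := by
  rw [mem_sdiff] at hx
  by_contra! hle
  have := mem_add_natCast_of_le_sub hnest hx.1 (i - j).val hle
  rw [Fin.cast_val_eq_self, add_sub_cancel] at this
  exact hx.2 this

end Necklace

/-- Each term of a Grassmann necklace belongs to the associated positroid. -/
theorem necklace_mem_positroid (n k : ℕ) [NeZero n]
    (N : Fin n → Finset (Fin n))
    (hcard : ∀ i, (N i).card = k)
    (hnest : ∀ i : Fin n, N i \ {i} ⊆ N (i + 1)) :
    ∀ j i : Fin n, galeLE j (N j) (N i) := by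
  intro j i
  refine galeLE_of_forall_sdiff j ((hcard j).trans (hcard i).symm) fun x hx y hy => ?_
  have hxj := sub_lt_sub_of_mem_sdiff hnest hx
  have hyi := sub_lt_sub_of_mem_sdiff hnest hy
  fin_omega
end
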